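/- arXiv:1807.00320 — 2 statements merged into one kernel-verified Lean document; each statement's English description precedes it below -/
import Mathlib

section
/- An m-th order n-dimensional real tensor A is an R0-tensor if and only if there exists ε > 0 such that for every δ > 0 and every a ∈ ℝ^n, the set S(ε,δ) = ⋃ { Sol(A+B, a+b) : B ∈ ℝ^{[m,n]} with ‖B‖ ≤ ε and b ∈ ℝ^n with ‖b‖ ≤ δ } is bounded in ℝ^n. -/
open Finset MeasureTheory Pointwise

/-- For a tensor `A` of order `k+1` and dimension `n` (entries `A i j` = `a_{i, j 0, …, j (k-1)}`),
`tApply A x` is the vector `A x^{k}` with `i`-th component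
`∑_{i_2,…,i_{k+1}} a_{i i_2 ⋯ i_{k+1}} x_{i_2} ⋯ x_{i_{k+1}}`. -/
noncomputable def tApply {n k : ℕ} (A : Fin n → (Fin k → Fin n) → ℝ) (x : Fin n → ℝ) :
    Fin n → ℝ :=
  fun i => ∑ j : Fin k → Fin n, A i j * ∏ l : Fin k, x (j l)

/-- The solution set of the tensor complementarity problem `TCP(A,a)`. -/
def Sol {n k : ℕ} (A : Fin n → (Fin k → Fin n) → ℝ) (a : Fin n → ℝ) : Set (Fin n → ℝ) :=
  {x | (∀ i, 0 ≤ x i) ∧ (∀ i, 0 ≤ tApply A x i + a i) ∧ ∑ i, x i * (tApply A x i + a i) = 0}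

/-- `A` is an R₀-tensor if `Sol(A,0) = {0}`. -/
def IsR0 {n k : ℕ} (A : Fin n → (Fin k → Fin n) → ℝ) : Prop := Sol A 0 = {0}

/-- Frobenius norm of a tensor. -/
noncomputable def tNorm {n k : ℕ} (A : Fin n → (Fin k → Fin n) → ℝ) : ℝ :=
  Real.sqrt (∑ i, ∑ j, (A i j) ^ 2)

/-- Euclidean norm of a vector in ℝⁿ. -/
noncomputable def eNorm {n : ℕ} (x : Fin n → ℝ) : ℝ := Real.sqrt (∑ i, (x i) ^ 2)

noncomputable def hfun {n k : ℕ} (T : Fin n → (Fin k → Fin n) → ℝ) (x : Fin n → ℝ) : ℝ :=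
  ∑ i, |min (x i) (tApply T x i)|

lemma hfun_nonneg {n k : ℕ} (T : Fin n → (Fin k → Fin n) → ℝ) (x : Fin n → ℝ) :
    0 ≤ hfun T x := Finset.sum_nonneg fun i _ => abs_nonneg _

lemma abs_le_eNorm {n : ℕ} (x : Fin n → ℝ) (i : Fin n) : |x i| ≤ eNorm x := by
  rw [← Real.sqrt_sq_eq_abs]
  exact Real.sqrt_le_sqrt (Finset.single_le_sum (fun j _ => sq_nonneg (x j)) (mem_univ i))

lemma eNorm_nonneg {n : ℕ} (x : Fin n → ℝ) : 0 ≤ eNorm x := Real.sqrt_nonneg _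

lemma norm_le_eNorm {n : ℕ} (x : Fin n → ℝ) : ‖x‖ ≤ eNorm x := by
  rw [pi_norm_le_iff_of_nonneg (eNorm_nonneg x)]
  intro i
  rw [Real.norm_eq_abs]
  exact abs_le_eNorm x i

lemma abs_le_tNorm {n k : ℕ} (B : Fin n → (Fin k → Fin n) → ℝ) (i : Fin n)
    (j : Fin k → Fin n) : |B i j| ≤ tNorm B := by
  rw [← Real.sqrt_sq_eq_abs]
  refine Real.sqrt_le_sqrt ?_
  calc B i j ^ 2 ≤ ∑ j', (B i j') ^ 2 :=
        Finset.single_le_sum (f := fun j' => B i j' ^ 2) (fun j' _ => sq_nonneg _) (mem_univ j)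
    _ ≤ ∑ i', ∑ j', (B i' j') ^ 2 :=
        Finset.single_le_sum (f := fun i' => ∑ j', (B i' j') ^ 2)
          (fun i' _ => Finset.sum_nonneg fun _ _ => sq_nonneg _) (mem_univ i)

lemma norm_le_tNorm {n k : ℕ} (B : Fin n → (Fin k → Fin n) → ℝ) : ‖B‖ ≤ tNorm B := by
  have h0 : (0:ℝ) ≤ tNorm B := Real.sqrt_nonneg _
  rw [pi_norm_le_iff_of_nonneg h0]
  intro i
  rw [pi_norm_le_iff_of_nonneg h0]
  intro j
  rw [Real.norm_eq_abs]
  exact abs_le_tNorm B i j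

lemma eNorm_smul {n : ℕ} (r : ℝ) (x : Fin n → ℝ) :
    eNorm (fun i => r * x i) = |r| * eNorm x := by
  unfold eNorm
  rw [← Real.sqrt_sq_eq_abs, ← Real.sqrt_mul (sq_nonneg r), Finset.mul_sum]
  congr 1
  exact Finset.sum_congr rfl fun i _ => by ring

lemma tApply_smul {n k : ℕ} (T : Fin n → (Fin k → Fin n) → ℝ) (r : ℝ) (x : Fin n → ℝ)
    (i : Fin n) : tApply T (fun j => r * x j) i = r ^ k * tApply T x i := by
  unfold tApply
  rw [Finset.mul_sum]
  refine Finset.sum_congr rfl fun j _ => ?_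
  rw [Finset.prod_mul_distrib, Finset.prod_const]
  simp only [Finset.card_univ, Fintype.card_fin]
  ring

lemma hfun_eq_zero_iff {n k : ℕ} (T : Fin n → (Fin k → Fin n) → ℝ) (x : Fin n → ℝ) :
    hfun T x = 0 ↔ x ∈ Sol T 0 := by
  rw [hfun, Finset.sum_eq_zero_iff_of_nonneg (fun i _ => abs_nonneg _)]
  constructor
  · intro h
    have hmin : ∀ i, min (x i) (tApply T x i) = 0 :=
      fun i => abs_eq_zero.mp (h i (mem_univ i))
    refine ⟨fun i => ?_, fun i => ?_, ?_⟩
    · have h := min_le_left (x i) (tApply T x i)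
      rwa [hmin i] at h
    · have h := min_le_right (x i) (tApply T x i)
      rw [hmin i] at h
      simpa using h
    · refine Finset.sum_eq_zero fun i _ => ?_
      rcases min_eq_iff.mp (hmin i) with ⟨h1, _⟩ | ⟨h1, _⟩
      · simp [h1]
      · simp [h1]
  · rintro ⟨h1, h2, h3⟩ i _
    have h2' : ∀ i, 0 ≤ tApply T x i := by simpa using h2
    have := (Finset.sum_eq_zero_iff_of_nonneg
      (fun i _ => mul_nonneg (h1 i) (h2 i))).mp h3 i (mem_univ i)
    simp only [Pi.zero_apply, add_zero] at this
    rcases mul_eq_zero.mp this with h | h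
    · rw [h, abs_eq_zero]
      exact min_eq_left (h ▸ h2' i)
    · rw [abs_eq_zero]
      exact h ▸ min_eq_right (h ▸ h1 i)

lemma continuous_tApply {n k : ℕ} (i : Fin n) :
    Continuous (fun p : (Fin n → (Fin k → Fin n) → ℝ) × (Fin n → ℝ) => tApply p.1 p.2 i) := by
  unfold tApply
  refine continuous_finset_sum _ fun j _ => Continuous.mul ?_ ?_
  · exact (continuous_apply j).comp ((continuous_apply i).comp continuous_fst)
  · exact continuous_finset_prod _ fun l _ => (continuous_apply (j l)).comp continuous_snd

lemma continuous_hfun {n k : ℕ} :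
    Continuous (fun p : (Fin n → (Fin k → Fin n) → ℝ) × (Fin n → ℝ) => hfun p.1 p.2) := by
  unfold hfun
  exact continuous_finset_sum _ fun i _ =>
    (((continuous_apply i).comp continuous_snd).min (continuous_tApply i)).abs

lemma continuous_eNorm {n : ℕ} : Continuous (eNorm (n := n)) := by
  unfold eNorm
  exact Real.continuous_sqrt.comp
    (continuous_finset_sum _ fun i _ => (continuous_apply i).pow 2)

set_option maxHeartbeats 1000000 in
/-- `A` is R₀ iff there is `ε > 0` such that for all `δ > 0` and all `a`,
the union of the sets `Sol(A+B, a+b)` over `‖B‖ ≤ ε`, `‖b‖ ≤ δ` is bounded. -/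
theorem stmt_3 (m n : ℕ) (hm : 2 ≤ m) (hn : 2 ≤ n) (A : Fin n → (Fin (m - 1) → Fin n) → ℝ) :
    IsR0 A ↔ ∃ ε > (0 : ℝ), ∀ δ > (0 : ℝ), ∀ a : Fin n → ℝ,
      Bornology.IsBounded {x : Fin n → ℝ | ∃ B : Fin n → (Fin (m - 1) → Fin n) → ℝ, ∃ b : Fin n → ℝ,
        tNorm B ≤ ε ∧ eNorm b ≤ δ ∧ x ∈ Sol (A + B) (a + b)} := by
  have hk : m - 1 ≠ 0 := by omega
  constructor
  · intro hR0
    -- the unit sphere is compact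
    set S : Set (Fin n → ℝ) := {x | eNorm x = 1} with hSdef
    have hSclosed : IsClosed S := isClosed_eq continuous_eNorm continuous_const
    have hSbdd : Bornology.IsBounded S := by
      rw [isBounded_iff_forall_norm_le]
      exact ⟨1, fun x hx => (norm_le_eNorm x).trans_eq hx⟩
    have hScomp : IsCompact S := Metric.isCompact_of_isClosed_isBounded hSclosed hSbdd
    have hSne : S.Nonempty := by
      have hn0 : (0:ℕ) < n := by omega
      refine ⟨fun j => if j = ⟨0, hn0⟩ then 1 else 0, ?_⟩
      show eNorm _ = 1
      rw [eNorm]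
      have h1 : (∑ i : Fin n, (if i = (⟨0, hn0⟩ : Fin n) then (1:ℝ) else 0) ^ 2) = 1 := by
        simp [apply_ite (fun r : ℝ => r ^ 2)]
      rw [h1, Real.sqrt_one]
    have hpos : ∀ x ∈ S, 0 < hfun A x := by
      intro x hx
      rcases (hfun_nonneg A x).lt_or_eq with h | h
      · exact h
      · exfalso
        have hx0 : x ∈ Sol A 0 := (hfun_eq_zero_iff A x).mp h.symm
        rw [hR0] at hx0
        have hxz : x = 0 := hx0
        have : eNorm x = 0 := by rw [hxz, eNorm]; simp
        rw [hx] at this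
        norm_num at this
    have hcont : Continuous
        (fun p : (Fin n → (Fin (m-1) → Fin n) → ℝ) × (Fin n → ℝ) => hfun (A + p.1) p.2) :=
      continuous_hfun.comp ((continuous_const.add continuous_fst).prodMk continuous_snd)
    -- choose ε such that every perturbation of size ≤ ε has positive hfun on the sphere
    set Z : Set ((Fin n → (Fin (m-1) → Fin n) → ℝ) × (Fin n → ℝ)) :=
      {p | ‖p.1‖ ≤ 1 ∧ p.2 ∈ S ∧ hfun (A + p.1) p.2 = 0} with hZdef
    have hZclosed : IsClosed Z := by
      have : Z = (fun p : (Fin n → (Fin (m-1) → Fin n) → ℝ) × (Fin n → ℝ) => ‖p.1‖) ⁻¹'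
          Set.Iic 1 ∩ (Prod.snd ⁻¹' S) ∩
          (fun p : (Fin n → (Fin (m-1) → Fin n) → ℝ) × (Fin n → ℝ) =>
            hfun (A + p.1) p.2) ⁻¹' {0} := by
        ext p; simp [hZdef, and_assoc]
      rw [this]
      exact ((isClosed_Iic.preimage continuous_fst.norm).inter
        (hSclosed.preimage continuous_snd)).inter (isClosed_singleton.preimage hcont)
    have hZcomp : IsCompact Z := by
      refine IsCompact.of_isClosed_subset ((isCompact_closedBall
        (0 : Fin n → (Fin (m-1) → Fin n) → ℝ) 1).prod hScomp) hZclosed ?_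
      rintro p ⟨h1, h2, _⟩
      exact ⟨by simpa [Metric.mem_closedBall, dist_zero_right] using h1, h2⟩
    obtain ⟨ε, hε, hεpos⟩ : ∃ ε > (0:ℝ), ∀ B x, ‖B‖ ≤ ε → x ∈ S → 0 < hfun (A + B) x := by
      by_cases hZ : Z.Nonempty
      · obtain ⟨p₀, hp₀, hmin⟩ := hZcomp.exists_isMinOn hZ continuous_fst.norm.continuousOn
        have hp₀pos : 0 < ‖p₀.1‖ := by
          rcases (norm_nonneg p₀.1).lt_or_eq with h | h
          · exact h
          · exfalso
            have hB0 : p₀.1 = 0 := norm_eq_zero.mp h.symm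
            have h0 := hp₀.2.2
            rw [hB0, add_zero] at h0
            exact absurd h0 (ne_of_gt (hpos p₀.2 hp₀.2.1))
        refine ⟨‖p₀.1‖ / 2, by positivity, fun B x hB hx => ?_⟩
        rcases (hfun_nonneg _ x).lt_or_eq with h | h
        · exact h
        · exfalso
          have hB1 : ‖B‖ ≤ 1 := hB.trans (by linarith [hp₀.1])
          have hmem : (B, x) ∈ Z := ⟨hB1, hx, h.symm⟩
          have h2 : ‖p₀.1‖ ≤ ‖B‖ := hmin hmem
          linarith
      · refine ⟨1, one_pos, fun B x hB hx => ?_⟩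
        rcases (hfun_nonneg _ x).lt_or_eq with h | h
        · exact h
        · exact absurd ⟨(B, x), hB, hx, h.symm⟩ hZ
    -- minimum value c of hfun over the compact set
    set K2 := Metric.closedBall (0 : Fin n → (Fin (m-1) → Fin n) → ℝ) ε ×ˢ S with hK2def
    have hK2comp : IsCompact K2 := (isCompact_closedBall _ _).prod hScomp
    have hK2ne : K2.Nonempty := by
      obtain ⟨x, hx⟩ := hSne
      exact ⟨(0, x), ⟨Metric.mem_closedBall_self hε.le, hx⟩⟩
    obtain ⟨p₁, hp₁, hminc⟩ := hK2comp.exists_isMinOn hK2ne hcont.continuousOn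
    set c := hfun (A + p₁.1) p₁.2 with hcdef
    have hp₁norm : ‖p₁.1‖ ≤ ε := by
      have := hp₁.1
      rwa [Metric.mem_closedBall, dist_zero_right] at this
    have hcpos : 0 < c := hεpos p₁.1 p₁.2 hp₁norm hp₁.2
    have hcle : ∀ B x, ‖B‖ ≤ ε → x ∈ S → c ≤ hfun (A + B) x := by
      intro B x hB hx
      exact hminc (⟨by rwa [Metric.mem_closedBall, dist_zero_right], hx⟩ :
        (B, x) ∈ K2)
    -- the main bound
    refine ⟨ε, hε, fun δ hδ a => ?_⟩
    rw [isBounded_iff_forall_norm_le]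
    refine ⟨max 1 ((∑ i, (|a i| + δ)) / c), ?_⟩
    rintro x ⟨B, b, hB, hb, hx1, hx2, hx3⟩
    set M := ∑ i, (|a i| + δ) with hMdef
    have hM0 : 0 ≤ M := Finset.sum_nonneg fun i _ => add_nonneg (abs_nonneg _) hδ.le
    refine (norm_le_eNorm x).trans ?_
    by_cases hR : eNorm x ≤ 1
    · exact hR.trans (le_max_left _ _)
    push_neg at hR
    set R := eNorm x with hRdef
    have hR0 : 0 < R := lt_trans one_pos hR
    have hRk : 0 < R ^ (m-1) := pow_pos hR0 _
    set y : Fin n → ℝ := fun i => R⁻¹ * x i with hydef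
    have hy : y ∈ S := by
      show eNorm y = 1
      rw [hydef, eNorm_smul, abs_of_pos (inv_pos.mpr hR0), ← hRdef, inv_mul_cancel₀ hR0.ne']
    have hBnorm : ‖B‖ ≤ ε := (norm_le_tNorm B).trans hB
    have key : c ≤ hfun (A + B) y := hcle B y hBnorm hy
    have hterm : ∀ i, x i * (tApply (A + B) x i + (a i + b i)) = 0 := by
      intro i
      have := (Finset.sum_eq_zero_iff_of_nonneg
        (fun i _ => mul_nonneg (hx1 i) (hx2 i))).mp hx3 i (mem_univ i)
      simpa [Pi.add_apply] using this
    have hup : hfun (A + B) y ≤ M / R ^ (m-1) := by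
      rw [hfun, hMdef, Finset.sum_div]
      refine Finset.sum_le_sum fun i _ => ?_
      have habs_b : |b i| ≤ δ := (abs_le_eNorm b i).trans hb
      have hci : |a i + b i| ≤ |a i| + δ := (abs_add_le _ _).trans (by
        have := abs_le_eNorm b i; linarith)
      have hty : tApply (A + B) y i = tApply (A + B) x i / R ^ (m-1) := by
        rw [hydef, tApply_smul, inv_pow, ← div_eq_inv_mul]
      have hfi : 0 ≤ tApply (A + B) x i + (a i + b i) := by
        have := hx2 i; simpa [Pi.add_apply] using this
      have hmain : |min (y i) (tApply (A + B) x i / R ^ (m-1))| ≤ |a i + b i| / R ^ (m-1) := by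
        rcases (hx1 i).eq_or_lt with hxi | hxi
        · -- x i = 0
          have hyi : y i = 0 := by rw [hydef]; simp [← hxi]
          rw [hyi, abs_le]
          constructor
          · refine le_min (neg_nonpos_of_nonneg (div_nonneg (abs_nonneg _) hRk.le)) ?_
            have hlow : -|a i + b i| ≤ tApply (A + B) x i := by
              have := le_abs_self (a i + b i); linarith
            rw [← neg_div]
            gcongr
          · exact (min_le_left _ _).trans (div_nonneg (abs_nonneg _) hRk.le)
        · -- 0 < x i
          have hti : tApply (A + B) x i = -(a i + b i) := by
            rcases mul_eq_zero.mp (hterm i) with h | h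
            · exact absurd h (ne_of_gt hxi)
            · linarith
          have hyi : 0 ≤ y i := by rw [hydef]; exact mul_nonneg (inv_pos.mpr hR0).le (hx1 i)
          have h1 : |min (y i) (tApply (A + B) x i / R ^ (m-1))| ≤
              |tApply (A + B) x i / R ^ (m-1)| := by
            rw [abs_le]
            constructor
            · exact le_min ((neg_nonpos_of_nonneg (abs_nonneg _)).trans hyi) (neg_abs_le _)
            · exact (min_le_right _ _).trans (le_abs_self _)
          refine h1.trans_eq ?_
          rw [abs_div, abs_of_pos hRk, hti, abs_neg]
      rw [hty]
      refine hmain.trans ?_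
      gcongr
    have hfinal : R ^ (m-1) ≤ M / c := by
      have h1 : c ≤ M / R ^ (m-1) := key.trans hup
      rw [le_div_iff₀ hRk] at h1
      rw [le_div_iff₀ hcpos]
      linarith [mul_comm c (R ^ (m-1))]
    have hRle : R ≤ R ^ (m-1) := le_self_pow₀ hR.le hk
    exact (hRle.trans hfinal).trans (le_max_right _ _)
  · rintro ⟨ε, hε, H⟩
    have hbdd := H 1 one_pos 0
    rw [isBounded_iff_forall_norm_le] at hbdd
    obtain ⟨C, hC⟩ := hbdd
    have htA0 : tApply A (0 : Fin n → ℝ) = 0 := by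
      funext i
      simp [tApply, Finset.prod_const, zero_pow hk]
    have h0mem : (0 : Fin n → ℝ) ∈ Sol A 0 := by
      refine ⟨fun i => le_refl 0, fun i => ?_, ?_⟩
      · rw [htA0]; simp
      · simp
    rw [IsR0]
    apply Set.eq_singleton_iff_unique_mem.mpr
    refine ⟨h0mem, ?_⟩
    intro x hx
    by_contra hxne
    obtain ⟨i0, hi0⟩ : ∃ i, x i ≠ 0 := by
      by_contra h; push_neg at h; exact hxne (funext h)
    have habs : 0 < |x i0| := abs_pos.mpr hi0
    set t := (|C| + 1) / |x i0| with htdef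
    have ht : 0 < t := by positivity
    obtain ⟨h1, h2, h3⟩ := hx
    have hmem : (fun i => t * x i) ∈ Sol A 0 := by
      refine ⟨fun i => mul_nonneg ht.le (h1 i), fun i => ?_, ?_⟩
      · rw [tApply_smul]
        have := h2 i
        simp only [Pi.zero_apply, add_zero] at this ⊢
        exact mul_nonneg (pow_nonneg ht.le _) this
      · have : ∀ i, (t * x i) * (tApply A (fun j => t * x j) i + (0 : Fin n → ℝ) i) =
            t ^ (m-1) * t * (x i * (tApply A x i + (0 : Fin n → ℝ) i)) := by
          intro i
          rw [tApply_smul]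
          simp only [Pi.zero_apply, add_zero]
          ring
        rw [Finset.sum_congr rfl (fun i _ => this i), ← Finset.mul_sum, h3, mul_zero]
    have hset : (fun i => t * x i) ∈ {x : Fin n → ℝ |
        ∃ B : Fin n → (Fin (m - 1) → Fin n) → ℝ, ∃ b : Fin n → ℝ,
        tNorm B ≤ ε ∧ eNorm b ≤ 1 ∧ x ∈ Sol (A + B) ((0 : Fin n → ℝ) + b)} := by
      refine ⟨0, 0, ?_, ?_, ?_⟩
      · simp [tNorm]; exact hε.le
      · simp [eNorm]
      · simpa using hmem
    have hCle := hC _ hset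
    have hge : |t * x i0| ≤ ‖fun i => t * x i‖ := by
      have h := norm_le_pi_norm (fun i => t * x i) i0
      rwa [Real.norm_eq_abs] at h
    have heq : |t * x i0| = |C| + 1 := by
      rw [abs_mul, abs_of_pos ht, htdef, div_mul_cancel₀ _ habs.ne']
    have : |C| + 1 ≤ C := by
      rw [← heq]
      exact hge.trans hCle
    have := le_abs_self C
    linarith
end

section
/- If A is an R0-tensor, then for every a ∈ ℝ^n with Sol(A,a) ≠ ∅, the solution map Sol is upper semicontinuous at (A,a): for every open set V ⊆ ℝ^n with Sol(A,a) ⊆ V, there exists an open neighborhood U of (A,a) in ℝ^{[m,n]} × ℝ^n such that Sol(B,b) ⊆ V for all (B,b) ∈ U. -/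
open Finset MeasureTheory Pointwise

section Aux
open Filter Topology

lemma tApply_continuous {n k : ℕ} :
    Continuous fun p : (Fin n → (Fin k → Fin n) → ℝ) × (Fin n → ℝ) => tApply p.1 p.2 := by
  unfold tApply
  refine continuous_pi fun i => continuous_finset_sum _ fun j _ => ?_
  fun_prop

lemma tApply_smul_s10 {n k : ℕ} (A : Fin n → (Fin k → Fin n) → ℝ) (c : ℝ) (x : Fin n → ℝ) :
    tApply A (c • x) = c ^ k • tApply A x := by
  funext i
  simp only [tApply, Pi.smul_apply, smul_eq_mul, Finset.mul_sum]
  refine Finset.sum_congr rfl fun j _ => ?_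
  simp only [Pi.smul_apply, smul_eq_mul, Finset.prod_mul_distrib, Finset.prod_const,
    Finset.card_univ, Fintype.card_fin]
  ring

lemma isClosed_solGraph {n k : ℕ} :
    IsClosed {q : ((Fin n → (Fin k → Fin n) → ℝ) × (Fin n → ℝ)) × (Fin n → ℝ) |
      q.2 ∈ Sol q.1.1 q.1.2} := by
  have hc : Continuous fun q : ((Fin n → (Fin k → Fin n) → ℝ) × (Fin n → ℝ)) × (Fin n → ℝ) =>
      tApply q.1.1 q.2 := tApply_continuous.comp (continuous_fst.fst.prodMk continuous_snd)
  have heq : {q : ((Fin n → (Fin k → Fin n) → ℝ) × (Fin n → ℝ)) × (Fin n → ℝ) |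
      q.2 ∈ Sol q.1.1 q.1.2} =
      (⋂ i, {q : ((Fin n → (Fin k → Fin n) → ℝ) × (Fin n → ℝ)) × (Fin n → ℝ) | 0 ≤ q.2 i}) ∩
      ((⋂ i, {q : ((Fin n → (Fin k → Fin n) → ℝ) × (Fin n → ℝ)) × (Fin n → ℝ) |
          0 ≤ tApply q.1.1 q.2 i + q.1.2 i}) ∩
        {q : ((Fin n → (Fin k → Fin n) → ℝ) × (Fin n → ℝ)) × (Fin n → ℝ) |
          ∑ i, q.2 i * (tApply q.1.1 q.2 i + q.1.2 i) = 0}) := by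
    ext q
    simp [Sol, Set.mem_iInter, and_assoc]
  rw [heq]
  refine IsClosed.inter (isClosed_iInter fun i =>
      isClosed_le continuous_const ((continuous_apply i).comp continuous_snd))
    (IsClosed.inter (isClosed_iInter fun i =>
      isClosed_le continuous_const (((continuous_apply i).comp hc).add
        ((continuous_apply i).comp continuous_fst.snd)))
      (isClosed_eq (continuous_finset_sum _ fun i _ =>
        ((continuous_apply i).comp continuous_snd).mul (((continuous_apply i).comp hc).add
          ((continuous_apply i).comp continuous_fst.snd))) continuous_const))

set_option maxHeartbeats 1000000 in
lemma sol_bounded {m n : ℕ} (hm : 2 ≤ m) (A : Fin n → (Fin (m - 1) → Fin n) → ℝ)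
    (hA : IsR0 A) (a : Fin n → ℝ) :
    ∃ ε > 0, ∃ R : ℝ, ∀ B b, dist (B, b) (A, a) < ε → ∀ x ∈ Sol B b, ‖x‖ ≤ R := by
  by_contra hcon
  push_neg at hcon
  have hseq : ∀ N : ℕ, ∃ q : ((Fin n → (Fin (m - 1) → Fin n) → ℝ) × (Fin n → ℝ)) × (Fin n → ℝ),
      dist q.1 (A, a) < ((N : ℝ) + 1)⁻¹ ∧ q.2 ∈ Sol q.1.1 q.1.2 ∧ (N : ℝ) + 1 < ‖q.2‖ := by
    intro N
    obtain ⟨B, b, hd, x, hx, hRx⟩ := hcon (((N : ℝ) + 1)⁻¹) (by positivity) ((N : ℝ) + 1)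
    exact ⟨((B, b), x), hd, hx, hRx⟩
  choose q hd hsol hbig using hseq
  have hxpos : ∀ N, 0 < ‖(q N).2‖ := fun N => lt_of_le_of_lt (by positivity) (hbig N)
  set y : ℕ → Fin n → ℝ := fun N => ‖(q N).2‖⁻¹ • (q N).2 with hy
  have hysph : ∀ N, y N ∈ Metric.sphere (0 : Fin n → ℝ) 1 := by
    intro N
    rw [mem_sphere_zero_iff_norm]
    simp [hy, norm_smul, Real.norm_eq_abs, abs_of_pos (inv_pos.mpr (hxpos N)),
      inv_mul_cancel₀ (hxpos N).ne']
  obtain ⟨y₀, hy₀s, φ, hφ, hyt⟩ := (isCompact_sphere (0 : Fin n → ℝ) 1).tendsto_subseq hysph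
  have hφt : Tendsto φ atTop atTop := hφ.tendsto_atTop
  have hqt : Tendsto (fun N => (q N).1) atTop (𝓝 (A, a)) := by
    rw [tendsto_iff_dist_tendsto_zero]
    refine squeeze_zero (fun N => dist_nonneg) (fun N => (hd N).le) ?_
    simpa [one_div] using tendsto_one_div_add_atTop_nhds_zero_nat (𝕜 := ℝ)
  have hqφt : Tendsto (fun k => (q (φ k)).1) atTop (𝓝 (A, a)) := hqt.comp hφt
  have hBt : Tendsto (fun k => (q (φ k)).1.1) atTop (𝓝 A) :=
    (continuous_fst.tendsto (A, a)).comp hqφt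
  have hbti : ∀ i, Tendsto (fun k => (q (φ k)).1.2 i) atTop (𝓝 (a i)) := fun i =>
    (((continuous_apply i).comp continuous_snd).tendsto (A, a)).comp hqφt
  have hyti : ∀ i, Tendsto (fun k => y (φ k) i) atTop (𝓝 (y₀ i)) := fun i =>
    ((continuous_apply i).tendsto y₀).comp hyt
  have hnt : Tendsto (fun k => ‖(q (φ k)).2‖) atTop atTop := by
    refine tendsto_atTop_mono (fun k => ?_)
      (tendsto_atTop_add_const_right _ 1 tendsto_natCast_atTop_atTop)
    have h1 := hbig (φ k)
    have h2 : (k : ℝ) ≤ (φ k : ℝ) := Nat.cast_le.mpr hφ.le_apply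
    linarith
  have hct : Tendsto (fun k => ‖(q (φ k)).2‖⁻¹ ^ (m - 1)) atTop (𝓝 0) := by
    have h0 : Tendsto (fun k => ‖(q (φ k)).2‖⁻¹) atTop (𝓝 0) := hnt.inv_tendsto_atTop
    have h1 := h0.pow (m - 1)
    simpa [zero_pow (show m - 1 ≠ 0 by omega)] using h1
  have hpair : Tendsto (fun k => ((q (φ k)).1.1, y (φ k))) atTop (𝓝 (A, y₀)) :=
    hBt.prodMk_nhds hyt
  have hTt' := (tApply_continuous.tendsto (A, y₀)).comp hpair
  simp only [Function.comp_def] at hTt'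
  have hTt : Tendsto (fun k => tApply (q (φ k)).1.1 (y (φ k))) atTop (𝓝 (tApply A y₀)) := hTt'
  have hTti : ∀ i, Tendsto (fun k => tApply (q (φ k)).1.1 (y (φ k)) i) atTop
      (𝓝 (tApply A y₀ i)) := fun i => ((continuous_apply i).tendsto _).comp hTt
  have hyApply : ∀ N, tApply (q N).1.1 (y N) = ‖(q N).2‖⁻¹ ^ (m - 1) • tApply (q N).1.1 (q N).2 :=
    fun N => tApply_smul_s10 _ _ _
  have hc1 : ∀ i, 0 ≤ y₀ i := by
    intro i
    refine ge_of_tendsto' (hyti i) fun k => ?_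
    simp only [hy, Pi.smul_apply, smul_eq_mul]
    exact mul_nonneg (inv_nonneg.mpr (norm_nonneg _)) ((hsol (φ k)).1 i)
  have hc2 : ∀ i, 0 ≤ tApply A y₀ i := by
    intro i
    have ht : Tendsto (fun k => tApply (q (φ k)).1.1 (y (φ k)) i +
        ‖(q (φ k)).2‖⁻¹ ^ (m - 1) * (q (φ k)).1.2 i) atTop (𝓝 (tApply A y₀ i + 0)) :=
      (hTti i).add (by simpa using hct.mul (hbti i))
    have h0 : 0 ≤ tApply A y₀ i + 0 := by
      refine ge_of_tendsto' ht fun k => ?_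
      have h3 := (hsol (φ k)).2.1 i
      have h4 : (0 : ℝ) ≤ ‖(q (φ k)).2‖⁻¹ ^ (m - 1) := by positivity
      rw [hyApply, Pi.smul_apply, smul_eq_mul, ← mul_add]
      exact mul_nonneg h4 h3
    linarith
  have hc3 : ∑ i, y₀ i * (tApply A y₀ i + 0) = 0 := by
    have ht : Tendsto (fun k => ∑ i, y (φ k) i * (tApply (q (φ k)).1.1 (y (φ k)) i +
        ‖(q (φ k)).2‖⁻¹ ^ (m - 1) * (q (φ k)).1.2 i)) atTop
        (𝓝 (∑ i, y₀ i * (tApply A y₀ i + 0))) := by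
      refine tendsto_finset_sum _ fun i _ => ?_
      exact (hyti i).mul ((hTti i).add (by simpa using hct.mul (hbti i)))
    have hzero : ∀ k, ∑ i, y (φ k) i * (tApply (q (φ k)).1.1 (y (φ k)) i +
        ‖(q (φ k)).2‖⁻¹ ^ (m - 1) * (q (φ k)).1.2 i) = 0 := by
      intro k
      have hmain := (hsol (φ k)).2.2
      have hm1 : m = (m - 1) + 1 := by omega
      calc ∑ i, y (φ k) i * (tApply (q (φ k)).1.1 (y (φ k)) i +
            ‖(q (φ k)).2‖⁻¹ ^ (m - 1) * (q (φ k)).1.2 i)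
          = ‖(q (φ k)).2‖⁻¹ ^ ((m - 1) + 1) * ∑ i, (q (φ k)).2 i *
            (tApply (q (φ k)).1.1 ((q (φ k)).2) i + (q (φ k)).1.2 i) := by
            rw [Finset.mul_sum]
            refine Finset.sum_congr rfl fun i _ => ?_
            rw [hyApply]
            simp only [hy, Pi.smul_apply, smul_eq_mul]
            ring
        _ = 0 := by rw [hmain]; ring
    have h0 : Tendsto (fun k => ∑ i, y (φ k) i * (tApply (q (φ k)).1.1 (y (φ k)) i +
        ‖(q (φ k)).2‖⁻¹ ^ (m - 1) * (q (φ k)).1.2 i)) atTop (𝓝 0) := by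
      simp only [hzero]
      exact tendsto_const_nhds
    exact tendsto_nhds_unique ht h0
  have hy0 : y₀ ∈ Sol A 0 := by
    refine ⟨hc1, fun i => by simpa using hc2 i, by simpa using hc3⟩
  rw [IsR0] at hA
  rw [hA, Set.mem_singleton_iff] at hy0
  have h1 : ‖y₀‖ = 1 := mem_sphere_zero_iff_norm.mp hy₀s
  rw [hy0] at h1
  simp at h1

end Aux

/-- if `A` is R₀, then the solution map is upper semicontinuous at `(A,a)`
whenever `Sol(A,a) ≠ ∅`. -/
theorem stmt_10 (m n : ℕ) (hm : 2 ≤ m) (hn : 2 ≤ n) (A : Fin n → (Fin (m - 1) → Fin n) → ℝ) (hA : IsR0 A)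
    (a : Fin n → ℝ) (hne : (Sol A a).Nonempty) :
    ∀ V' : Set (Fin n → ℝ), IsOpen V' → Sol A a ⊆ V' →
      ∃ U : Set ((Fin n → (Fin (m - 1) → Fin n) → ℝ) × (Fin n → ℝ)), IsOpen U ∧ (A, a) ∈ U ∧
        ∀ p ∈ U, Sol p.1 p.2 ⊆ V' := by
  intro V' hV' hVsub
  obtain ⟨ε, hε, R, hR⟩ := sol_bounded hm A hA a
  have hSc : IsClosed {q : ((Fin n → (Fin (m - 1) → Fin n) → ℝ) × (Fin n → ℝ)) × (Fin n → ℝ) |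
      q.2 ∈ Sol q.1.1 q.1.2} := isClosed_solGraph
  set K : Set (Fin n → ℝ) := Metric.closedBall 0 R ∩ V'ᶜ with hK
  have hKc : IsCompact K := (isCompact_closedBall 0 R).inter_right hV'.isClosed_compl
  have hsub : ({((A, a) : (Fin n → (Fin (m - 1) → Fin n) → ℝ) × (Fin n → ℝ))} : Set _) ×ˢ K ⊆
      {q : ((Fin n → (Fin (m - 1) → Fin n) → ℝ) × (Fin n → ℝ)) × (Fin n → ℝ) |
        q.2 ∈ Sol q.1.1 q.1.2}ᶜ := by
    rintro ⟨p, x⟩ ⟨hp, hx⟩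
    simp only [Set.mem_singleton_iff] at hp
    subst hp
    intro hmem
    exact hx.2 (hVsub hmem)
  obtain ⟨u, v, hu, hv, hAu, hKv, huv⟩ :=
    generalized_tube_lemma isCompact_singleton hKc hSc.isOpen_compl hsub
  refine ⟨u ∩ Metric.ball (A, a) ε, hu.inter Metric.isOpen_ball,
    ⟨hAu rfl, Metric.mem_ball_self hε⟩, ?_⟩
  rintro p ⟨hpu, hpb⟩ x hx
  by_contra hxV
  have hxR : ‖x‖ ≤ R := hR p.1 p.2 (by simpa using Metric.mem_ball.mp hpb) x hx
  have hxK : x ∈ K := ⟨Metric.mem_closedBall.mpr (by simpa [dist_zero_right] using hxR), hxV⟩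
  have hpx : (p, x) ∈ u ×ˢ v := ⟨hpu, hKv hxK⟩
  exact huv hpx hx
end
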